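/- arXiv:2501.04294 — 3 statements merged into one kernel-verified Lean document; each statement's English description precedes it below -/
import Mathlib

section
/- Let (Λ₁, φ₁) and (Λ₂, φ₂) be topological flows on compact metric spaces and let P : Λ₁ → Λ₂ be a continuous surjection satisfying P(φ₁(t,x)) = φ₂(t, P(x)) for all t ∈ ℝ and x ∈ Λ₁. Suppose there exists a closed orbit γ ⊂ Λ₁ of φ₁ (the orbit of a periodic point with minimal period T₀ > 0) such that P(γ) is a single point which is a singularity of φ₂ (a fixed point of the flow φ₂), and the restriction of P to Λ₁ \ γ is a bijection onto Λ₂ \ P(γ). If φ₁ has the standard shadowing property, then φ₂ has the standard shadowing property. -/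
/-!
The pseudotrajectory `ξ` of `φ₂` is lifted to a pseudotrajectory of `φ₁`, which is shadowed by
hypothesis; the projection of the shadowing orbit shadows `ξ`. The lift is built at integer times
and joined up by the flow. Away from the singularity `q`, `P` has a uniformly continuous inverse,
so the preimages of `ξ n` form a pseudo-orbit. Near `q` the preimages accumulate on the closed
orbit `γ` without any control of their phase, so on each maximal run of times at which `ξ` stays
near `q` and comes very near it, the lift follows `γ` instead, slightly faster than `φ₁`, so that
it enters and leaves the run close to the preimages. The speed-up is small because such runs are
long: as `q` is fixed, a pseudotrajectory needs many steps to get from far from `q` to very near.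
-/

open Metric Set

/-- A topological flow: a continuous map `φ : ℝ × Λ → Λ` with `φ 0 x = x` and
`φ (s+t) x = φ s (φ t x)`. -/
def IsFlow {Λ : Type*} [TopologicalSpace Λ] (φ : ℝ → Λ → Λ) : Prop :=
  Continuous (fun q : ℝ × Λ => φ q.1 q.2) ∧ (∀ x, φ 0 x = x) ∧
    ∀ s t x, φ (s + t) x = φ s (φ t x)

/-- `ξ : ℝ → Λ` is a `d`-pseudotrajectory of the flow `φ`. -/
def IsPseudo {Λ : Type*} [MetricSpace Λ] (φ : ℝ → Λ → Λ) (d : ℝ) (ξ : ℝ → Λ) : Prop :=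
  ∀ t : ℝ, ∀ s ∈ Set.Icc (0 : ℝ) 1, dist (ξ (t + s)) (φ s (ξ t)) < d

/-- An orientation-preserving homeomorphism of `ℝ`. -/
def IsRep (f : ℝ → ℝ) : Prop :=
  Continuous f ∧ StrictMono f ∧ Function.Surjective f

/-- Membership in `Rep(ε)`. -/
def IsRepIn (ε : ℝ) (f : ℝ → ℝ) : Prop :=
  IsRep f ∧ ∀ a b : ℝ, b < a → |(f a - f b) / (a - b) - 1| < ε

/-- The standard shadowing property (on the whole space). -/
def StdShadowing {Λ : Type*} [MetricSpace Λ] (φ : ℝ → Λ → Λ) : Prop :=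
  ∀ ε > 0, ∃ d > 0, ∀ ξ : ℝ → Λ, IsPseudo φ d ξ →
    ∃ (x : Λ) (h : ℝ → ℝ), IsRepIn ε h ∧ ∀ t : ℝ, dist (ξ t) (φ (h t) x) < ε

/-- The chain recurrent set of a flow. -/
def CR {Λ : Type*} [MetricSpace Λ] (φ : ℝ → Λ → Λ) : Set Λ :=
  {x | ∀ d > 0, ∀ T > 0, ∃ ξ : ℝ → Λ, IsPseudo φ d ξ ∧ ξ 0 = x ∧ ∃ t ≥ T, ξ t = x}

def IsPseudoOrbit {Λ : Type*} [MetricSpace Λ] (f : Λ → Λ) (d : ℝ) (x : ℤ → Λ) : Prop :=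
  ∀ n : ℤ, dist (x (n + 1)) (f (x n)) < d

lemma IsPseudoOrbit.mono {Λ : Type*} [MetricSpace Λ] {f : Λ → Λ} {d d' : ℝ} {x : ℤ → Λ}
    (h : IsPseudoOrbit f d x) (hd : d ≤ d') : IsPseudoOrbit f d' x :=
  fun n => (h n).trans_le hd

lemma IsPseudo.isPseudoOrbit {Λ : Type*} [MetricSpace Λ] {φ : ℝ → Λ → Λ} {d : ℝ} {ξ : ℝ → Λ}
    (h : IsPseudo φ d ξ) : IsPseudoOrbit (φ 1) d (fun n => ξ n) := fun n => by
  simpa using h n 1 (right_mem_Icc.2 zero_le_one)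

namespace IsFlow

section Topological

variable {Λ : Type*} [TopologicalSpace Λ] {φ : ℝ → Λ → Λ}

lemma map_zero (hφ : IsFlow φ) (x : Λ) : φ 0 x = x := hφ.2.1 x

lemma map_add (hφ : IsFlow φ) (s t : ℝ) (x : Λ) : φ (s + t) x = φ s (φ t x) := hφ.2.2 s t x

lemma map_neg_map (hφ : IsFlow φ) (t : ℝ) (x : Λ) : φ (-t) (φ t x) = x := by
  rw [← hφ.map_add, neg_add_cancel, hφ.map_zero]

lemma continuous_map (hφ : IsFlow φ) (t : ℝ) : Continuous (φ t) :=
  hφ.1.comp (Continuous.prodMk_right t)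

lemma periodic_orbit (hφ : IsFlow φ) {T : ℝ} {p : Λ} (hper : φ T p = p) :
    Function.Periodic (fun t => φ t p) T := fun t => by
  simp only [hφ.map_add, hper]

end Topological

variable {Λ : Type*} [MetricSpace Λ] {φ : ℝ → Λ → Λ}

lemma exists_dist_map_lt [CompactSpace Λ] (hφ : IsFlow φ) {ε : ℝ} (hε : 0 < ε) :
    ∃ β > 0, ∀ r ∈ Icc (0 : ℝ) 1, ∀ r' ∈ Icc (0 : ℝ) 1, ∀ x x' : Λ,
      |r - r'| < β → dist x x' < β → dist (φ r x) (φ r' x') < ε := by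
  have hUC := (isCompact_Icc (a := (0 : ℝ)) (b := 1)).prod (isCompact_univ (X := Λ))
    |>.uniformContinuousOn_of_continuous hφ.1.continuousOn
  obtain ⟨β, hβ, hβε⟩ := Metric.uniformContinuousOn_iff.1 hUC ε hε
  refine ⟨β, hβ, fun r hr r' hr' x x' hrr' hxx' =>
    hβε (r, x) ⟨hr, trivial⟩ (r', x') ⟨hr', trivial⟩ ?_⟩
  rw [Prod.dist_eq, Real.dist_eq]
  exact max_lt hrr' hxx'

lemma exists_dist_map_one_lt_and_dist_map_self_lt [CompactSpace Λ] (hφ : IsFlow φ) {ε : ℝ}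
    (hε : 0 < ε) :
    ∃ c ∈ Ioc 0 ε, (∀ u v, dist u v < c → dist (φ 1 u) (φ 1 v) < ε) ∧
      ∀ w, ∀ ν ∈ Icc 0 c, dist (φ ν w) w < ε := by
  obtain ⟨β, hβ, hβε⟩ := hφ.exists_dist_map_lt hε
  have hc : min (β / 2) (min 1 ε) < β := (min_le_left _ _).trans_lt (half_lt_self hβ)
  have hc₁ : min (β / 2) (min 1 ε) ≤ 1 := (min_le_right _ _).trans (min_le_left _ _)
  refine ⟨min (β / 2) (min 1 ε), ⟨by positivity, (min_le_right _ _).trans (min_le_right _ _)⟩,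
    fun u v huv => hβε 1 ⟨zero_le_one, le_rfl⟩ 1 ⟨zero_le_one, le_rfl⟩ u v (by simpa using hβ)
      (huv.trans hc), fun w ν ⟨hν₀, hνc⟩ => ?_⟩
  have := hβε ν ⟨hν₀, hνc.trans hc₁⟩ 0 ⟨le_rfl, zero_le_one⟩ w w
    (by rw [sub_zero, abs_of_nonneg hν₀]; exact hνc.trans_lt hc) (by simpa using hβ)
  rwa [hφ.map_zero] at this

lemma exists_le_dist_map_one (hφ : IsFlow φ) {q : Λ} (hq : φ (-1) q = q) {r : ℝ}
    (hr : 0 < r) :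
    ∃ μ > 0, ∀ y, r ≤ dist y q → μ ≤ dist (φ 1 y) q := by
  obtain ⟨μ, hμ, hμr⟩ := Metric.continuousAt_iff.1 (hφ.continuous_map (-1)).continuousAt r hr
  refine ⟨μ, hμ, fun y hy => le_of_not_gt fun hlt => ?_⟩
  have := hμr hlt
  rw [hφ.map_neg_map, hq] at this
  exact hy.not_gt this

lemma exists_le_dist_of_isPseudoOrbit (hφ : IsFlow φ) {q : Λ} (hq : φ (-1) q = q) (N : ℕ)
    {r : ℝ} (hr : 0 < r) :
    ∃ r' ∈ Ioc 0 r, ∀ x : ℤ → Λ, IsPseudoOrbit (φ 1) r' x → ∀ m, r ≤ dist (x m) q →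
      ∀ j : ℕ, j ≤ N → r' ≤ dist (x (m + j)) q := by
  induction N with
  | zero =>
    refine ⟨r, ⟨hr, le_rfl⟩, fun x _ m hm j hj => ?_⟩
    obtain rfl : j = 0 := Nat.le_zero.1 hj
    simpa using hm
  | succ N ih =>
    obtain ⟨r', ⟨hr', hr'r⟩, hfar⟩ := ih
    obtain ⟨μ, hμ, hμr⟩ := hφ.exists_le_dist_map_one hq hr'
    refine ⟨min r' (μ / 2), ⟨by positivity, (min_le_left _ _).trans hr'r⟩,
      fun x hx m hm j hj => ?_⟩
    have hfar' := hfar x (hx.mono (min_le_left _ _)) m hm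
    rcases Nat.of_le_succ hj with hj | rfl
    · exact (min_le_left _ _).trans (hfar' j hj)
    · have hstep := hx (m + N)
      have hμN := hμr _ (hfar' N le_rfl)
      have htri := dist_triangle_left (φ 1 (x (m + N))) q (x (m + N + 1))
      push_cast
      rw [← add_assoc]
      linarith [min_le_right r' (μ / 2), dist_comm (x (m + ↑N + 1)) (φ 1 (x (m + ↑N)))]

lemma exists_lt_sub_of_isPseudoOrbit (hφ : IsFlow φ) {q : Λ} (hq : φ (-1) q = q) (N : ℕ)
    {r : ℝ} (hr : 0 < r) :
    ∃ r' ∈ Ioc 0 r, ∀ x : ℤ → Λ, IsPseudoOrbit (φ 1) r' x →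
      ∀ m k, r ≤ dist (x m) q → dist (x k) q < r' → m < k → N < k - m := by
  obtain ⟨r', hr', hfar⟩ := hφ.exists_le_dist_of_isPseudoOrbit hq N hr
  refine ⟨r', hr', fun x hx m k hm hk hmk => lt_of_not_ge fun hN => hk.not_ge ?_⟩
  have := hfar x hx m hm (k - m).toNat (by omega)
  rwa [Int.toNat_of_nonneg (by omega), add_sub_cancel] at this

lemma exists_isPseudo_of_isPseudoOrbit [CompactSpace Λ] (hφ : IsFlow φ) {d : ℝ} (hd : 0 < d) :
    ∃ c > 0, ∀ y : ℤ → Λ, IsPseudoOrbit (φ 1) c y →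
      IsPseudo φ d (fun t => φ (t - ⌊t⌋) (y ⌊t⌋)) := by
  obtain ⟨c, hc, hcd⟩ := hφ.exists_dist_map_lt hd
  refine ⟨c, hc, fun y hy t s ⟨hs0, hs1⟩ => ?_⟩
  have hlo : ⌊t⌋ ≤ ⌊t + s⌋ := Int.floor_mono (by linarith)
  have hhi : ⌊t + s⌋ ≤ ⌊t⌋ + 1 := by
    rw [← Int.floor_add_one]; exact Int.floor_mono (by linarith)
  have hflow : φ s (φ (t - ⌊t⌋) (y ⌊t⌋)) = φ (t + s - ⌊t⌋) (y ⌊t⌋) := by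
    rw [← hφ.map_add]; ring_nf
  dsimp only
  rw [hflow]
  rcases (show ⌊t + s⌋ = ⌊t⌋ ∨ ⌊t + s⌋ = ⌊t⌋ + 1 by omega) with h | h
  · rw [h, dist_self]
    exact hd
  · have h1 := Int.floor_le (t + s)
    have h2 := Int.lt_floor_add_one t
    rw [h] at h1 ⊢
    push_cast at h1 ⊢
    rw [show t + s - ⌊t⌋ = (t + s - (⌊t⌋ + 1)) + 1 by ring, hφ.map_add]
    exact hcd _ ⟨by linarith, by linarith⟩ _ ⟨by linarith, by linarith⟩ _ _
      (by simpa using hc) (hy ⌊t⌋)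

end IsFlow

section Compact

variable {X Y : Type*} [MetricSpace X] [CompactSpace X] [MetricSpace Y] {f : X → Y}

lemma exists_dist_lt_of_dist_map_lt_of_injOn (hf : Continuous f) {K : Set X} (hK : IsClosed K)
    (hinj : InjOn f K) {α : ℝ} (hα : 0 < α) :
    ∃ β > 0, ∀ x ∈ K, ∀ x' ∈ K, dist (f x) (f x') < β → dist x x' < α := by
  let S : Set (X × X) := K ×ˢ K ∩ {z | α ≤ dist z.1 z.2}
  have hS : IsCompact S := ((hK.prod hK).inter
    (isClosed_le continuous_const (continuous_fst.dist continuous_snd))).isCompact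
  obtain ⟨β, hβ, hβS⟩ := hS.exists_forall_le' (a := 0)
    ((hf.comp continuous_fst).dist (hf.comp continuous_snd)).continuousOn
    fun z ⟨⟨hz₁, hz₂⟩, hzα⟩ => dist_pos.2 fun heq => by
      have hα' : α ≤ dist z.1 z.2 := hzα
      rw [hinj hz₁ hz₂ heq, dist_self] at hα'
      exact hα.not_ge hα'
  exact ⟨β, hβ, fun x hx x' hx' hlt => lt_of_not_ge fun hαx =>
    (hβS (x, x') ⟨⟨hx, hx'⟩, hαx⟩).not_gt hlt⟩

lemma exists_infDist_lt_of_dist_map_lt (hf : Continuous f) {s : Set X} {y : Y}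
    (hs : ∀ x, f x = y → x ∈ s) {ρ : ℝ} (hρ : 0 < ρ) :
    ∃ δ > 0, ∀ x, dist (f x) y < δ → infDist x s < ρ := by
  have hK : IsCompact {x | ρ ≤ infDist x s} :=
    (isClosed_le continuous_const (continuous_infDist_pt s)).isCompact
  obtain ⟨δ, hδ, hδK⟩ := hK.exists_forall_le' (a := 0) (hf.dist continuous_const).continuousOn
    fun x hx => dist_pos.2 fun heq => by
      have hρ' : ρ ≤ infDist x s := hx
      rw [infDist_zero_of_mem (hs x heq)] at hρ'
      exact hρ.not_ge hρ'
  exact ⟨δ, hδ, fun x hlt => lt_of_not_ge fun hx => (hδK x hx).not_gt hlt⟩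

end Compact

section Factor

variable {Λ₁ Λ₂ : Type*} [MetricSpace Λ₁] [MetricSpace Λ₂] {φ₁ : ℝ → Λ₁ → Λ₁}
  {φ₂ : ℝ → Λ₂ → Λ₂} {P : Λ₁ → Λ₂}

lemma exists_isPseudo_lift_of_isPseudoOrbit [CompactSpace Λ₁] [CompactSpace Λ₂]
    (hφ₁ : IsFlow φ₁) (hφ₂ : IsFlow φ₂) (hsemi : ∀ (t : ℝ) (x : Λ₁), P (φ₁ t x) = φ₂ t (P x))
    (hlift : ∀ α > 0, ∀ κ > 0, ∃ d > 0, ∀ x : ℤ → Λ₂, IsPseudoOrbit (φ₂ 1) d x →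
      ∃ y : ℤ → Λ₁, IsPseudoOrbit (φ₁ 1) α y ∧ ∀ n, dist (x n) (P (y n)) < κ)
    {d₁ κ : ℝ} (hd₁ : 0 < d₁) (hκ : 0 < κ) :
    ∃ d > 0, ∀ ξ : ℝ → Λ₂, IsPseudo φ₂ d ξ →
      ∃ η : ℝ → Λ₁, IsPseudo φ₁ d₁ η ∧ ∀ t, dist (ξ t) (P (η t)) < κ := by
  obtain ⟨α, hα, hαη⟩ := hφ₁.exists_isPseudo_of_isPseudoOrbit hd₁
  obtain ⟨β, hβ, hβκ⟩ := hφ₂.exists_dist_map_lt (half_pos hκ)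
  obtain ⟨d, hd, hdy⟩ := hlift α hα β hβ
  refine ⟨min d (κ / 2), by positivity, fun ξ hξ => ?_⟩
  obtain ⟨y, hy, hyξ⟩ := hdy _ (hξ.isPseudoOrbit.mono (min_le_left _ _))
  refine ⟨_, hαη y hy, fun t => ?_⟩
  have hr : t - ⌊t⌋ ∈ Icc (0 : ℝ) 1 := ⟨Int.fract_nonneg t, (Int.fract_lt_one t).le⟩
  have hξt := hξ ⌊t⌋ _ hr
  rw [add_sub_cancel] at hξt
  calc dist (ξ t) (P (φ₁ (t - ⌊t⌋) (y ⌊t⌋)))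
      ≤ dist (ξ t) (φ₂ (t - ⌊t⌋) (ξ ⌊t⌋)) +
          dist (φ₂ (t - ⌊t⌋) (ξ ⌊t⌋)) (φ₂ (t - ⌊t⌋) (P (y ⌊t⌋))) := by
        rw [hsemi]; exact dist_triangle _ _ _
    _ < κ / 2 + κ / 2 := add_lt_add (hξt.trans_le (min_le_right _ _))
        (hβκ _ hr _ hr _ _ (by simpa using hβ) (hyξ _))
    _ = κ := add_halves κ

theorem StdShadowing.of_exists_isPseudo_lift (hshadow : StdShadowing φ₁)
    (hP : UniformContinuous P)
    (hsemi : ∀ (t : ℝ) (x : Λ₁), P (φ₁ t x) = φ₂ t (P x))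
    (hlift : ∀ d₁ > 0, ∀ κ > 0, ∃ d > 0, ∀ ξ : ℝ → Λ₂, IsPseudo φ₂ d ξ →
      ∃ η : ℝ → Λ₁, IsPseudo φ₁ d₁ η ∧ ∀ t, dist (ξ t) (P (η t)) < κ) :
    StdShadowing φ₂ := by
  intro ε hε
  obtain ⟨β, hβ, hβε⟩ := Metric.uniformContinuous_iff.1 hP (ε / 2) (half_pos hε)
  obtain ⟨d₁, hd₁, hshadow₁⟩ := hshadow (min ε β) (lt_min hε hβ)
  obtain ⟨d, hd, hdη⟩ := hlift d₁ hd₁ (ε / 2) (half_pos hε)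
  refine ⟨d, hd, fun ξ hξ => ?_⟩
  obtain ⟨η, hη, hηξ⟩ := hdη ξ hξ
  obtain ⟨x, h, ⟨hrep, hslope⟩, hx⟩ := hshadow₁ η hη
  refine ⟨P x, h, ⟨hrep, fun a b hab => (hslope a b hab).trans_le (min_le_left _ _)⟩,
    fun t => ?_⟩
  calc dist (ξ t) (φ₂ (h t) (P x))
      ≤ dist (ξ t) (P (η t)) + dist (P (η t)) (P (φ₁ (h t) x)) := by
        rw [hsemi]; exact dist_triangle _ _ _
    _ < ε / 2 + ε / 2 := add_lt_add (hηξ t) (hβε ((hx t).trans_le (min_le_right _ _)))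
    _ = ε := add_halves ε

end Factor

section Phase

variable {T₀ : ℝ} (hT₀ : 0 < T₀)

/-- The speed at which a phase goes from `s` at time `a` to `s'` modulo `T₀` at time `b`,
gaining less than one period. -/
noncomputable def phaseSpeed (a b : ℤ) (s s' : ℝ) : ℝ :=
  1 + toIcoMod hT₀ 0 (s' - s - (b - a : ℤ)) / (b - a : ℤ)

variable {hT₀}

lemma phaseSpeed_mem {a b : ℤ} {s s' c : ℝ} (hc : 0 ≤ c) (hab : T₀ ≤ c * (b - a : ℤ)) :
    phaseSpeed hT₀ a b s s' ∈ Icc 1 (1 + c) := by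
  have hpos : (0 : ℝ) < (b - a : ℤ) := pos_of_mul_pos_right (hT₀.trans_le hab) hc
  obtain ⟨h0, hT⟩ := toIcoMod_mem_Ico' hT₀ (s' - s - (b - a : ℤ))
  refine ⟨le_add_of_nonneg_right (div_nonneg h0 hpos.le), (add_le_add_iff_left 1).2 ?_⟩
  rw [div_le_iff₀ hpos]
  linarith

lemma Function.Periodic.map_add_mul_phaseSpeed {α : Type*} {f : ℝ → α} (hf : Function.Periodic f T₀)
    {a b : ℤ} (hab : a ≠ b) (s s' : ℝ) :
    f (s + (b - a : ℤ) * phaseSpeed hT₀ a b s s') = f s' := by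
  have hne : ((b - a : ℤ) : ℝ) ≠ 0 := by exact_mod_cast sub_ne_zero.2 hab.symm
  have hdiv := self_sub_toIcoMod hT₀ 0 (s' - s - (b - a : ℤ))
  rw [phaseSpeed, mul_add, mul_one, mul_div_cancel₀ _ hne, ← add_assoc,
    show s + (b - a : ℤ) + toIcoMod hT₀ 0 (s' - s - (b - a : ℤ)) =
      s' - toIcoDiv hT₀ 0 (s' - s - (b - a : ℤ)) • T₀ by linarith]
  exact hf.sub_zsmul_eq _

variable (hT₀)

open Classical in
/-- `L` and `R` stand for the far times up to and from a time `n`, so the run of `n` goes from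
`sSup L + 1` to `sInf R - 1`. The phase `runPhase` is affine in time, equal to `σ` at the start
of the run and, modulo `T₀`, at its end. -/
noncomputable def runAnchor (L R : Set ℤ) : ℤ :=
  if L.Nonempty then sSup L + 1 else sInf R - 1

open Classical in
noncomputable def runSpeed (σ : ℤ → ℝ) (L R : Set ℤ) : ℝ :=
  if L.Nonempty ∧ R.Nonempty then
    phaseSpeed hT₀ (sSup L + 1) (sInf R - 1) (σ (sSup L + 1)) (σ (sInf R - 1))
  else 1

noncomputable def runPhase (σ : ℤ → ℝ) (L R : Set ℤ) (n : ℤ) : ℝ :=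
  σ (runAnchor L R) + (n - runAnchor L R : ℤ) * runSpeed hT₀ σ L R

variable {hT₀} {σ : ℤ → ℝ} {L R : Set ℤ}

lemma runPhase_succ (n : ℤ) :
    runPhase hT₀ σ L R (n + 1) = runPhase hT₀ σ L R n + runSpeed hT₀ σ L R := by
  simp only [runPhase]
  push_cast
  ring

lemma runSpeed_mem {c : ℝ} (hc : 0 ≤ c)
    (hlen : L.Nonempty → R.Nonempty → T₀ ≤ c * (sInf R - 1 - (sSup L + 1) : ℤ)) :
    runSpeed hT₀ σ L R ∈ Icc 1 (1 + c) := by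
  rw [runSpeed]
  split_ifs with h
  · exact phaseSpeed_mem hc (hlen h.1 h.2)
  · exact ⟨le_rfl, le_add_of_nonneg_right hc⟩

lemma runPhase_of_isGreatest {m : ℤ} (hL : IsGreatest L m) :
    runPhase hT₀ σ L R (m + 1) = σ (m + 1) := by
  have hne : L.Nonempty := ⟨m, hL.1⟩
  simp [runPhase, runAnchor, hne, hL.csSup_eq]

lemma Function.Periodic.runPhase_of_isLeast {α : Type*} {f : ℝ → α}
    (hf : Function.Periodic f T₀) {c : ℝ}
    (hlen : L.Nonempty → R.Nonempty → T₀ ≤ c * (sInf R - 1 - (sSup L + 1) : ℤ))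
    {m : ℤ} (hR : IsLeast R (m + 1)) :
    f (runPhase hT₀ σ L R m) = f (σ m) := by
  have hRm : sInf R - 1 = m := by rw [hR.csInf_eq, add_sub_cancel_right]
  by_cases hL : L.Nonempty
  · have hlen' := hlen hL ⟨_, hR.1⟩
    rw [hRm] at hlen'
    have hne : sSup L + 1 ≠ m := by
      rintro rfl
      simp only [sub_self, Int.cast_zero, mul_zero] at hlen'
      exact hT₀.not_ge hlen'
    have hLR : L.Nonempty ∧ R.Nonempty := ⟨hL, _, hR.1⟩
    simp only [runPhase, runAnchor, runSpeed, if_pos hL, if_pos hLR, hRm]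
    exact hf.map_add_mul_phaseSpeed hne _ _
  · simp [runPhase, runAnchor, hL, hRm]

end Phase

section Tube

variable {M D : ℤ → Prop} {n : ℤ}

/-- With `M n` read as "`x n` is near `q`" and `D n` as "very near", `n` lies in a tube when its
maximal run of near times contains a very near one. -/
def InTube (M D : ℤ → Prop) (n : ℤ) : Prop :=
  ∃ k, D k ∧ ∀ j ∈ uIcc k n, M j

lemma InTube.mid (h : InTube M D n) : M n :=
  let ⟨_, _, hk⟩ := h
  hk n right_mem_uIcc

lemma inTube_of_deep (hDM : ∀ n, D n → M n) (h : D n) : InTube M D n :=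
  ⟨n, h, fun j hj => by rw [uIcc_self, mem_singleton_iff] at hj; exact hj ▸ hDM n h⟩

lemma InTube.succ (h : InTube M D n) (hM : M (n + 1)) : InTube M D (n + 1) := by
  obtain ⟨k, hk, hkM⟩ := h
  refine ⟨k, hk, fun j hj => ?_⟩
  rcases eq_or_ne j (n + 1) with rfl | hj'
  · exact hM
  · exact hkM j (by rw [mem_uIcc] at hj ⊢; omega)

lemma InTube.of_succ (h : InTube M D (n + 1)) (hM : M n) : InTube M D n := by
  obtain ⟨k, hk, hkM⟩ := h
  refine ⟨k, hk, fun j hj => ?_⟩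
  rcases eq_or_ne j n with rfl | hj'
  · exact hM
  · exact hkM j (by rw [mem_uIcc] at hj ⊢; omega)

lemma InTube.exists_deep (h : InTube M D n) :
    ∃ k, D k ∧ (∀ m, ¬M m → m ≤ n → m < k) ∧ (∀ m, ¬M m → n ≤ m → k < m) := by
  obtain ⟨k, hk, hkM⟩ := h
  refine ⟨k, hk, fun m hm hmn => ?_, fun m hm hnm => ?_⟩ <;>
  · by_contra hmk
    exact hm (hkM m (by rw [mem_uIcc]; omega))

variable {T₀ c : ℝ}

lemma InTube.le_mul_length (h : InTube M D n) (hc : 0 ≤ c)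
    (hlong : ∀ m k, ¬M m → D k → m < k → T₀ ≤ c * (k - m - 1 : ℤ))
    (hL : {m | ¬M m ∧ m ≤ n}.Nonempty) (hR : {m | ¬M m ∧ n ≤ m}.Nonempty) :
    T₀ ≤ c * (sInf {m | ¬M m ∧ n ≤ m} - 1 - (sSup {m | ¬M m ∧ m ≤ n} + 1) : ℤ) := by
  obtain ⟨k, hk, hkL, hkR⟩ := h.exists_deep
  obtain ⟨hLM, hLn⟩ := Int.csSup_mem hL ⟨n, fun m hm => hm.2⟩
  obtain ⟨hRM, hRn⟩ := Int.csInf_mem hR ⟨n, fun m hm => hm.2⟩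
  have h₁ := hkL _ hLM hLn
  have h₂ := hkR _ hRM hRn
  refine (hlong _ k hLM hk h₁).trans (mul_le_mul_of_nonneg_left ?_ hc)
  exact_mod_cast (by omega)

variable (hT₀ : 0 < T₀)

noncomputable def tubePhase (M : ℤ → Prop) (σ : ℤ → ℝ) (n : ℤ) : ℝ :=
  runPhase hT₀ σ {m | ¬M m ∧ m ≤ n} {m | ¬M m ∧ n ≤ m} n

variable {hT₀} {σ : ℤ → ℝ}

lemma InTube.tubePhase_succ (h : InTube M D n) (hM : M (n + 1)) (hc : 0 ≤ c)
    (hlong : ∀ m k, ¬M m → D k → m < k → T₀ ≤ c * (k - m - 1 : ℤ)) :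
    ∃ ν ∈ Icc 0 c, tubePhase hT₀ M σ (n + 1) = tubePhase hT₀ M σ n + 1 + ν := by
  have hL : {m | ¬M m ∧ m ≤ n + 1} = {m | ¬M m ∧ m ≤ n} := by
    ext m
    refine ⟨fun ⟨hm, hmn⟩ => ⟨hm, ?_⟩, fun ⟨hm, hmn⟩ => ⟨hm, by omega⟩⟩
    have : m ≠ n + 1 := by rintro rfl; exact hm hM
    omega
  have hR : {m | ¬M m ∧ n + 1 ≤ m} = {m | ¬M m ∧ n ≤ m} := by
    ext m
    refine ⟨fun ⟨hm, hmn⟩ => ⟨hm, by omega⟩, fun ⟨hm, hmn⟩ => ⟨hm, ?_⟩⟩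
    have : m ≠ n := by rintro rfl; exact hm h.mid
    omega
  obtain ⟨h₁, h₂⟩ := runSpeed_mem (hT₀ := hT₀) (σ := σ) hc (h.le_mul_length hc hlong)
  refine ⟨_, ⟨sub_nonneg.2 h₁, by linarith⟩, ?_⟩
  rw [tubePhase, tubePhase, hL, hR, runPhase_succ]
  ring

lemma tubePhase_succ_of_not_mid (hn : ¬M n) (hM : M (n + 1)) :
    tubePhase hT₀ M σ (n + 1) = σ (n + 1) := by
  refine runPhase_of_isGreatest ⟨⟨hn, by omega⟩, fun m ⟨hm, hmn⟩ => ?_⟩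
  have : m ≠ n + 1 := by rintro rfl; exact hm hM
  omega

lemma Function.Periodic.tubePhase_of_not_mid_succ {α : Type*} {f : ℝ → α}
    (hf : Function.Periodic f T₀) (h : InTube M D n) (hM : ¬M (n + 1)) (hc : 0 ≤ c)
    (hlong : ∀ m k, ¬M m → D k → m < k → T₀ ≤ c * (k - m - 1 : ℤ)) :
    f (tubePhase hT₀ M σ n) = f (σ n) := by
  refine hf.runPhase_of_isLeast (h.le_mul_length hc hlong)
    ⟨⟨hM, by omega⟩, fun m ⟨hm, hmn⟩ => ?_⟩
  have : m ≠ n := by rintro rfl; exact hm h.mid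
  omega

end Tube

section TubeLift

variable {Λ : Type*} [MetricSpace Λ] {T₀ : ℝ} (hT₀ : 0 < T₀)

open Classical in
noncomputable def tubeLift (φ : ℝ → Λ → Λ) (p : Λ) (M D : ℤ → Prop) (pre : ℤ → Λ) (σ : ℤ → ℝ)
    (n : ℤ) : Λ :=
  if InTube M D n then φ (tubePhase hT₀ M σ n) p else pre n

variable {hT₀} {φ : ℝ → Λ → Λ} {p : Λ} {M D : ℤ → Prop} {pre : ℤ → Λ} {σ : ℤ → ℝ} {c α : ℝ}

lemma tubeLift_isPseudoOrbit (hφ : IsFlow φ) (hper : φ T₀ p = p) (hDM : ∀ n, D n → M n)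
    (hc : 0 ≤ c) (hlong : ∀ m k, ¬M m → D k → m < k → T₀ ≤ c * (k - m - 1 : ℤ))
    (hpre : ∀ n, ¬D (n + 1) → dist (pre (n + 1)) (φ 1 (pre n)) < α / 2)
    (hσ : ∀ n, M n → dist (pre n) (φ (σ n) p) < c) (hcα : c ≤ α / 2)
    (hmap_one : ∀ u v, dist u v < c → dist (φ 1 u) (φ 1 v) < α / 2)
    (hshift : ∀ w, ∀ ν ∈ Icc 0 c, dist (φ ν w) w < α) :
    IsPseudoOrbit (φ 1) α (tubeLift hT₀ φ p M D pre σ) := by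
  intro n
  by_cases hn : InTube M D n <;> by_cases hn' : InTube M D (n + 1)
  · obtain ⟨ν, hν, heq⟩ := hn.tubePhase_succ (hT₀ := hT₀) (σ := σ) hn'.mid hc hlong
    rw [tubeLift, tubeLift, if_pos hn', if_pos hn, heq,
      show ∀ θ : ℝ, θ + 1 + ν = ν + (1 + θ) from fun θ => by ring, hφ.map_add, hφ.map_add]
    exact hshift _ ν hν
  · have hM : ¬M (n + 1) := fun h => hn' (hn.succ h)
    have hexit : φ 1 (φ (tubePhase hT₀ M σ n) p) = φ 1 (φ (σ n) p) :=
      ((hφ.periodic_orbit hper).comp (φ 1)).tubePhase_of_not_mid_succ hn hM hc hlong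
    rw [tubeLift, tubeLift, if_neg hn', if_pos hn, hexit]
    calc dist (pre (n + 1)) (φ 1 (φ (σ n) p))
        ≤ dist (pre (n + 1)) (φ 1 (pre n)) + dist (φ 1 (pre n)) (φ 1 (φ (σ n) p)) :=
          dist_triangle _ _ _
      _ < α / 2 + α / 2 :=
          add_lt_add (hpre n fun h => hM (hDM _ h)) (hmap_one _ _ (hσ n hn.mid))
      _ = α := add_halves α
  · have hM : ¬M n := fun h => hn (hn'.of_succ h)
    have hD : ¬D (n + 1) := fun h => by
      have := hlong n (n + 1) hM h (lt_add_one n)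
      simp only [add_sub_cancel_left, sub_self, Int.cast_zero, mul_zero] at this
      exact hT₀.not_ge this
    rw [tubeLift, tubeLift, if_pos hn', if_neg hn, tubePhase_succ_of_not_mid hM hn'.mid]
    calc dist (φ (σ (n + 1)) p) (φ 1 (pre n))
        ≤ dist (φ (σ (n + 1)) p) (pre (n + 1)) + dist (pre (n + 1)) (φ 1 (pre n)) :=
          dist_triangle _ _ _
      _ < c + α / 2 := add_lt_add (by rw [dist_comm]; exact hσ _ hn'.mid) (hpre n hD)
      _ ≤ α := by linarith
  · rw [tubeLift, tubeLift, if_neg hn', if_neg hn]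
    have := hpre n fun h => hn' (inTube_of_deep hDM h)
    linarith [dist_nonneg (x := pre (n + 1)) (y := φ 1 (pre n))]

end TubeLift

section Collapse

variable {Λ₁ Λ₂ : Type*} [MetricSpace Λ₁] [CompactSpace Λ₁] [MetricSpace Λ₂]
  {φ₁ : ℝ → Λ₁ → Λ₁} {φ₂ : ℝ → Λ₂ → Λ₂} {P : Λ₁ → Λ₂} {γ : Set Λ₁} {q : Λ₂}

lemma exists_dist_map_one_lt_of_le_dist (hPcont : Continuous P)
    (hsemi : ∀ (t : ℝ) (x : Λ₁), P (φ₁ t x) = φ₂ t (P x)) (hPγ : ∀ x ∈ γ, P x = q)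
    (hbij : BijOn P γᶜ {q}ᶜ) {θ c : ℝ} (hθ : 0 < θ) (hc : 0 < c) :
    ∃ β > 0, ∀ z z', θ ≤ dist (P z') q → dist (P z') (φ₂ 1 (P z)) < β →
      dist z' (φ₁ 1 z) < c := by
  have hγc : ∀ z, θ / 2 ≤ dist (P z) q → z ∈ γᶜ := fun z hz hzγ => by
    rw [hPγ z hzγ, dist_self] at hz
    linarith
  obtain ⟨β, hβ, hβc⟩ := exists_dist_lt_of_dist_map_lt_of_injOn hPcont
    (isClosed_le continuous_const (hPcont.dist continuous_const))
    (fun z hz z' hz' => hbij.injOn (hγc z hz) (hγc z' hz')) hc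
  refine ⟨min β (θ / 2), by positivity, fun z z' hz' hzz' => ?_⟩
  have htri := dist_triangle_left (P z') q (φ₂ 1 (P z))
  refine hβc z' (show θ / 2 ≤ dist (P z') q by linarith) _ (show θ / 2 ≤ dist (P (φ₁ 1 z)) q by
    rw [hsemi]; linarith [min_le_right β (θ / 2), dist_comm (P z') (φ₂ 1 (P z))]) ?_
  rw [hsemi]
  exact hzz'.trans_le (min_le_left _ _)

lemma exists_dist_orbit_lt_of_dist_lt (hPcont : Continuous P) {p : Λ₁}
    (hγ : γ = range fun t : ℝ => φ₁ t p) (hbij : BijOn P γᶜ {q}ᶜ) {c : ℝ} (hc : 0 < c) :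
    ∃ δ > 0, ∀ z, dist (P z) q < δ → ∃ s, dist z (φ₁ s p) < c := by
  obtain ⟨δ, hδ, hδc⟩ := exists_infDist_lt_of_dist_map_lt hPcont
    (fun z hz => by_contra fun hzγ => hbij.mapsTo hzγ hz) hc
  subst hγ
  refine ⟨δ, hδ, fun z hz => ?_⟩
  obtain ⟨_, ⟨s, rfl⟩, hs⟩ := (infDist_lt_iff (range_nonempty _)).1 (hδc z hz)
  exact ⟨s, hs⟩

theorem exists_isPseudoOrbit_lift (hφ₁ : IsFlow φ₁) (hφ₂ : IsFlow φ₂) (hPcont : Continuous P)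
    (hPsurj : Function.Surjective P) (hsemi : ∀ (t : ℝ) (x : Λ₁), P (φ₁ t x) = φ₂ t (P x))
    {p : Λ₁} {T₀ : ℝ} (hT₀ : 0 < T₀) (hper : φ₁ T₀ p = p) (hγ : γ = range fun t : ℝ => φ₁ t p)
    (hPγ : ∀ x ∈ γ, P x = q) (hq : ∀ t : ℝ, φ₂ t q = q) (hbij : BijOn P γᶜ {q}ᶜ)
    {α κ : ℝ} (hα : 0 < α) (hκ : 0 < κ) :
    ∃ d > 0, ∀ x : ℤ → Λ₂, IsPseudoOrbit (φ₂ 1) d x →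
      ∃ y : ℤ → Λ₁, IsPseudoOrbit (φ₁ 1) α y ∧ ∀ n, dist (x n) (P (y n)) < κ := by
  obtain ⟨c, ⟨hc, hcα⟩, hmap_one, hshift⟩ :=
    hφ₁.exists_dist_map_one_lt_and_dist_map_self_lt (half_pos hα)
  obtain ⟨δ, hδ, hnear⟩ := exists_dist_orbit_lt_of_dist_lt hPcont hγ hbij hc
  obtain ⟨δs, ⟨hδs, hδsm⟩, hfar⟩ :=
    hφ₂.exists_lt_sub_of_isPseudoOrbit (hq (-1)) ⌈T₀ / c⌉₊ (lt_min hδ hκ)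
  obtain ⟨β, hβ, hstep⟩ := exists_dist_map_one_lt_of_le_dist hPcont hsemi hPγ hbij hδs hc
  refine ⟨min δs β, lt_min hδs hβ, fun x hx => ?_⟩
  set pre := fun n => Function.surjInv hPsurj (x n)
  have hPpre (n : ℤ) : P (pre n) = x n := Function.surjInv_eq hPsurj _
  have hphase (n : ℤ) : ∃ s, dist (x n) q < min δ κ → dist (pre n) (φ₁ s p) < c := by
    by_cases hn : dist (x n) q < min δ κ
    · exact (hnear _ ((hPpre n).symm ▸ hn.trans_le (min_le_left _ _))).imp fun _ hs _ => hs
    · exact ⟨0, fun h => absurd h hn⟩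
  choose σ hσ using hphase
  -- Tubes are long: from far from `q` a pseudo-orbit needs more than `T₀ / c` steps to get very
  -- near `q`, so along a tube the orbit of `p` has to be sped up by at most `c`.
  have hlong (m k : ℤ) (hm : ¬dist (x m) q < min δ κ) (hk : dist (x k) q < δs) (hmk : m < k) :
      T₀ ≤ c * (k - m - 1 : ℤ) := by
    have hN := hfar x (hx.mono (min_le_left _ _)) m k (not_lt.1 hm) hk hmk
    rw [← div_le_iff₀' hc]
    exact (Nat.le_ceil _).trans (by exact_mod_cast (by omega))
  refine ⟨tubeLift hT₀ φ₁ p (fun n => dist (x n) q < min δ κ) (fun n => dist (x n) q < δs)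
      pre σ,
    tubeLift_isPseudoOrbit hφ₁ hper (fun n h => h.trans_le hδsm) hc.le hlong
      (fun n hn => (hstep _ _ (by simpa [hPpre] using hn) (by
        simpa [hPpre] using (hx n).trans_le (min_le_right _ _))).trans_le hcα)
      hσ hcα hmap_one (fun w ν hν => (hshift w ν hν).trans (half_lt_self hα)), fun n => ?_⟩
  rw [tubeLift]
  split_ifs with hn
  · rw [hPγ _ (hγ ▸ ⟨_, rfl⟩)]
    exact hn.mid.trans_le (min_le_right _ _)
  · rw [hPpre, dist_self]
    exact hκ

end Collapse

theorem factor_preserves_standard_shadowing_general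
    {Λ₁ Λ₂ : Type*} [MetricSpace Λ₁] [CompactSpace Λ₁] [MetricSpace Λ₂] [CompactSpace Λ₂]
    (φ₁ : ℝ → Λ₁ → Λ₁) (φ₂ : ℝ → Λ₂ → Λ₂) (hφ₁ : IsFlow φ₁) (hφ₂ : IsFlow φ₂)
    (P : Λ₁ → Λ₂) (hPcont : Continuous P) (hPsurj : Function.Surjective P)
    (hsemi : ∀ (t : ℝ) (x : Λ₁), P (φ₁ t x) = φ₂ t (P x))
    (p : Λ₁) (T₀ : ℝ) (hT₀ : 0 < T₀) (hper : φ₁ T₀ p = p)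
    (γ : Set Λ₁) (hγ : γ = Set.range fun t : ℝ => φ₁ t p)
    (q : Λ₂) (hPγ : ∀ x ∈ γ, P x = q) (hq : ∀ t : ℝ, φ₂ t q = q)
    (hbij : Set.BijOn P γᶜ {q}ᶜ)
    (hshadow : StdShadowing φ₁) :
    StdShadowing φ₂ := by
  have hliftOrbit : ∀ α > 0, ∀ κ > 0, ∃ d > 0, ∀ x : ℤ → Λ₂, IsPseudoOrbit (φ₂ 1) d x →
      ∃ y : ℤ → Λ₁, IsPseudoOrbit (φ₁ 1) α y ∧ ∀ n, dist (x n) (P (y n)) < κ :=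
    fun _ hα _ hκ =>
      exists_isPseudoOrbit_lift hφ₁ hφ₂ hPcont hPsurj hsemi hT₀ hper hγ hPγ hq hbij hα hκ
  exact hshadow.of_exists_isPseudo_lift (CompactSpace.uniformContinuous_of_continuous hPcont)
    hsemi fun _ hd₁ _ hκ => exists_isPseudo_lift_of_isPseudoOrbit hφ₁ hφ₂ hsemi hliftOrbit hd₁ hκ

/-- Theorem 1.2 (factor theorem): if `P` is a semiconjugacy between flows on compact metric
spaces which collapses exactly one closed orbit `γ` to a singularity and is a bijection
elsewhere, then the standard shadowing property of `φ₁` implies that of `φ₂`. -/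
theorem factor_preserves_standard_shadowing
    {Λ₁ Λ₂ : Type*} [MetricSpace Λ₁] [CompactSpace Λ₁] [MetricSpace Λ₂] [CompactSpace Λ₂]
    (φ₁ : ℝ → Λ₁ → Λ₁) (φ₂ : ℝ → Λ₂ → Λ₂) (hφ₁ : IsFlow φ₁) (hφ₂ : IsFlow φ₂)
    (P : Λ₁ → Λ₂) (hPcont : Continuous P) (hPsurj : Function.Surjective P)
    (hsemi : ∀ (t : ℝ) (x : Λ₁), P (φ₁ t x) = φ₂ t (P x))
    (p : Λ₁) (T₀ : ℝ) (hT₀ : 0 < T₀) (hper : φ₁ T₀ p = p)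
    (hmin : ∀ t ∈ Set.Ioo 0 T₀, φ₁ t p ≠ p)
    (γ : Set Λ₁) (hγ : γ = Set.range fun t : ℝ => φ₁ t p)
    (q : Λ₂) (hPγ : ∀ x ∈ γ, P x = q) (hq : ∀ t : ℝ, φ₂ t q = q)
    (hbij : Set.BijOn P γᶜ {q}ᶜ)
    (hshadow : StdShadowing φ₁) :
    StdShadowing φ₂ :=
  factor_preserves_standard_shadowing_general φ₁ φ₂ hφ₁ hφ₂ P hPcont hPsurj hsemi p T₀ hT₀ hper γ hγ
    q hPγ hq hbij hshadow
end

section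
/- Let (Λ, φ) be a topological flow on a compact metric space and let h : Λ → ℝ be a continuous function such that for every p ∈ Λ with h(p) ≠ 0 and every t > 0 one has |h(φ(t,p))| < |h(p)| and sgn(h(φ(t,p))) = sgn(h(p)). Then every chain recurrent point p of φ satisfies h(p) = 0, i.e. CR(φ) ⊆ h⁻¹({0}). -/
open Metric Set

lemma sign_neg' (x : ℝ) : Real.sign (-x) = -Real.sign x := by
  rcases lt_trichotomy x 0 with hx | hx | hx
  · rw [Real.sign_of_pos (by linarith), Real.sign_of_neg hx]; ring
  · simp [hx]
  · rw [Real.sign_of_neg (by linarith), Real.sign_of_pos hx]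

section Aux

set_option linter.unusedSectionVars false

variable {Λ : Type*} [MetricSpace Λ] [CompactSpace Λ]
  (φ : ℝ → Λ → Λ) (hφ : IsFlow φ)
  (h : Λ → ℝ) (hcont : Continuous h)
  (hdec : ∀ p : Λ, h p ≠ 0 → ∀ t : ℝ, 0 < t →
      |h (φ t p)| < |h p| ∧ Real.sign (h (φ t p)) = Real.sign (h p))

include hφ hcont hdec

/-- positive values strictly decrease and stay positive -/
lemma pos_decr {x : Λ} (hx : 0 < h x) {t : ℝ} (ht : 0 < t) :
    0 < h (φ t x) ∧ h (φ t x) < h x := by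
  obtain ⟨habs, hsgn⟩ := hdec x hx.ne' t ht
  rw [Real.sign_of_pos hx] at hsgn
  have hpos : 0 < h (φ t x) := by
    rcases lt_trichotomy (h (φ t x)) 0 with hc | hc | hc
    · rw [Real.sign_of_neg hc] at hsgn; norm_num at hsgn
    · rw [hc, Real.sign_zero] at hsgn; norm_num at hsgn
    · exact hc
  refine ⟨hpos, ?_⟩
  rwa [abs_of_pos hpos, abs_of_pos hx] at habs

/-- negative values stay negative -/
lemma neg_stays {x : Λ} (hx : h x < 0) {t : ℝ} (ht : 0 < t) : h (φ t x) < 0 := by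
  obtain ⟨_, hsgn⟩ := hdec x hx.ne t ht
  rw [Real.sign_of_neg hx] at hsgn
  rcases lt_trichotomy (h (φ t x)) 0 with hc | hc | hc
  · exact hc
  · rw [hc, Real.sign_zero] at hsgn; norm_num at hsgn
  · rw [Real.sign_of_pos hc] at hsgn; norm_num at hsgn

/-- if `h x = 0` then `h (φ s x) ≤ 0` for all `s ≥ 0`. -/
lemma zero_stays {x : Λ} (hx : h x = 0) {s : ℝ} (hs : 0 ≤ s) : h (φ s x) ≤ 0 := by
  by_contra hb
  push_neg at hb
  have hfc : Continuous (fun u : ℝ => h (φ u x)) :=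
    hcont.comp (hφ.1.comp (continuous_id.prodMk continuous_const))
  have hspos : 0 < s := by
    rcases lt_or_eq_of_le hs with hlt | he
    · exact hlt
    · exfalso; rw [← he, hφ.2.1, hx] at hb; exact lt_irrefl 0 hb
  have hSne : (Icc 0 s ∩ (fun u : ℝ => h (φ u x)) ⁻¹' Iic 0).Nonempty :=
    ⟨0, ⟨le_refl 0, hs⟩, by simp only [mem_preimage, mem_Iic]; rw [hφ.2.1, hx]⟩
  have hSbdd : BddAbove (Icc 0 s ∩ (fun u : ℝ => h (φ u x)) ⁻¹' Iic 0) :=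
    ⟨s, fun u hu => hu.1.2⟩
  have hSclosed : IsClosed (Icc 0 s ∩ (fun u : ℝ => h (φ u x)) ⁻¹' Iic 0) :=
    isClosed_Icc.inter (isClosed_Iic.preimage hfc)
  obtain ⟨⟨ht0ge, ht0le⟩, ht0neg⟩ := hSclosed.csSup_mem hSne hSbdd
  set t0 := sSup (Icc 0 s ∩ (fun u : ℝ => h (φ u x)) ⁻¹' Iic 0) with ht0def
  have ht0neg' : h (φ t0 x) ≤ 0 := ht0neg
  have hcompose : ∀ u : ℝ, h (φ (s - u) (φ u x)) = h (φ s x) := by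
    intro u
    have := hφ.2.2 (s - u) u x
    rw [show s - u + u = s by ring] at this
    rw [this]
  -- h (φ t0 x) = 0
  have hft0 : h (φ t0 x) = 0 := by
    rcases lt_or_eq_of_le ht0neg' with hneg | he
    · exfalso
      have ht0lt : t0 < s := by
        rcases lt_or_eq_of_le ht0le with hlt | he2
        · exact hlt
        · exfalso; rw [he2] at hneg; linarith
      have := neg_stays φ hφ h hcont hdec hneg (by linarith : (0:ℝ) < s - t0)
      rw [hcompose t0] at this
      linarith
    · exact he
  have ht0lt : t0 < s := by
    rcases lt_or_eq_of_le ht0le with hlt | he2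
    · exact hlt
    · exfalso; rw [he2] at hft0; rw [hft0] at hb; exact lt_irrefl 0 hb
  -- pick u with t0 < u < s and h (φ u x) < h (φ s x)
  have hca : ContinuousAt (fun u : ℝ => h (φ u x)) t0 := hfc.continuousAt
  rw [Metric.continuousAt_iff] at hca
  obtain ⟨δ, hδ, hball⟩ := hca (h (φ s x)) hb
  set u := min (t0 + δ/2) ((t0 + s)/2) with hu
  have hu1 : t0 < u := lt_min (by linarith) (by linarith)
  have hu2 : u < s := min_lt_of_right_lt (by linarith)
  have hfu_lt : h (φ u x) < h (φ s x) := by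
    have hd : dist u t0 < δ := by
      rw [Real.dist_eq, abs_of_pos (by linarith : (0:ℝ) < u - t0)]
      have : u ≤ t0 + δ/2 := min_le_left _ _
      linarith
    have := hball hd
    rw [Real.dist_eq, hft0, sub_zero] at this
    calc h (φ u x) ≤ |h (φ u x)| := le_abs_self _
      _ < h (φ s x) := this
  have hfu_pos : 0 < h (φ u x) := by
    by_contra hc
    push_neg at hc
    have hmem : u ∈ Icc 0 s ∩ (fun u : ℝ => h (φ u x)) ⁻¹' Iic 0 :=
      ⟨⟨by linarith, hu2.le⟩, hc⟩
    exact absurd (le_csSup hSbdd hmem) (not_le.mpr hu1)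
  have := (pos_decr φ hφ h hcont hdec hfu_pos (by linarith : (0:ℝ) < s - u)).2
  rw [hcompose u] at this
  linarith

/-- sublevel sets with nonneg threshold are forward invariant -/
lemma sublevel_invariant {C : ℝ} (hC : 0 ≤ C) {x : Λ} (hx : h x ≤ C) {s : ℝ} (hs : 0 ≤ s) :
    h (φ s x) ≤ C := by
  rcases eq_or_lt_of_le hs with hs0 | hs0
  · rw [← hs0, hφ.2.1]; exact hx
  rcases lt_trichotomy (h x) 0 with hx0 | hx0 | hx0
  · exact le_trans (neg_stays φ hφ h hcont hdec hx0 hs0).le hC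
  · exact le_trans (zero_stays φ hφ h hcont hdec hx0 hs) hC
  · exact le_trans (pos_decr φ hφ h hcont hdec hx0 hs0).2.le hx

/-- main auxiliary: chain-recurrent points have `h p ≤ 0`. -/
lemma aux_le_zero : ∀ p ∈ CR φ, h p ≤ 0 := by
  intro p hp
  by_contra hb
  push_neg at hb
  obtain ⟨a, ha⟩ : ∃ a, a = h p := ⟨_, rfl⟩
  rw [← ha] at hb
  obtain ⟨c, hc⟩ : ∃ c, c = a / 2 := ⟨_, rfl⟩
  have hcpos : 0 < c := by rw [hc]; linarith
  have hca : c < a := by rw [hc]; linarith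
  -- compact set K and uniform decrease η
  have hKclosed : IsClosed (h ⁻¹' Ici c) := isClosed_Ici.preimage hcont
  have hKcompact : IsCompact (h ⁻¹' Ici c) := hKclosed.isCompact
  have hKne : (h ⁻¹' Ici c).Nonempty := ⟨p, by simp only [mem_preimage, mem_Ici, ← ha]; linarith⟩
  have hgc : Continuous (fun x : Λ => h x - h (φ 1 x)) := by
    have : Continuous (fun x : Λ => φ 1 x) :=
      hφ.1.comp (continuous_const.prodMk continuous_id)
    exact hcont.sub (hcont.comp this)
  obtain ⟨x0, hx0K, hx0min⟩ := hKcompact.exists_isMinOn hKne hgc.continuousOn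
  obtain ⟨η, hηdef⟩ : ∃ η, η = h x0 - h (φ 1 x0) := ⟨_, rfl⟩
  have hηpos : 0 < η := by
    have hx0pos : 0 < h x0 := lt_of_lt_of_le hcpos hx0K
    have := (pos_decr φ hφ h hcont hdec hx0pos one_pos).2
    rw [hηdef]; linarith
  have hmin : ∀ x, c ≤ h x → η ≤ h x - h (φ 1 x) := by
    intro x hx
    have := hx0min (show x ∈ h ⁻¹' Ici c from hx)
    rw [hηdef]; exact this
  -- ε and d
  obtain ⟨ε, hεpos, hεη, hεa⟩ : ∃ ε, 0 < ε ∧ ε ≤ η/2 ∧ ε ≤ a/7 :=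
    ⟨min (η/2) (a/7), lt_min (by linarith) (by linarith), min_le_left _ _, min_le_right _ _⟩
  have huc : UniformContinuous h := CompactSpace.uniformContinuous_of_continuous hcont
  rw [Metric.uniformContinuous_iff] at huc
  obtain ⟨d, hd, hdball⟩ := huc ε hεpos
  -- N and pseudotrajectory
  obtain ⟨N, hNη⟩ : ∃ N : ℕ, a ≤ N * η := by
    refine ⟨⌈a / η⌉₊, ?_⟩
    have := Nat.le_ceil (a / η)
    calc a = (a / η) * η := by field_simp
      _ ≤ (⌈a / η⌉₊ : ℝ) * η := mul_le_mul_of_nonneg_right this hηpos.le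
  obtain ⟨ξ, hξpseudo, hξ0, t, htT, hξt⟩ := hp d hd ((N : ℝ) + 1) (by positivity)
  -- step estimates
  have hstep : ∀ (u : ℝ) (s : ℝ), s ∈ Set.Icc (0:ℝ) 1 →
      h (ξ (u + s)) < h (φ s (ξ u)) + ε := by
    intro u s hs
    have := hdball (hξpseudo u s hs)
    rw [Real.dist_eq] at this
    have := (abs_lt.mp this).2
    linarith
  -- invariant
  have hinv : ∀ n : ℕ, h (ξ n) ≤ max (c + 2*ε) (a - n * (η/2)) := by
    intro n
    induction n with
    | zero => simp [hξ0, ← ha]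
    | succ n ih =>
      have hs1 : (1:ℝ) ∈ Set.Icc (0:ℝ) 1 := ⟨zero_le_one, le_refl 1⟩
      have hstep1 : h (ξ ((n:ℝ) + 1)) < h (φ 1 (ξ n)) + ε := hstep n 1 hs1
      have hcast : ((n+1 : ℕ) : ℝ) = (n:ℝ) + 1 := by push_cast; ring
      rw [hcast]
      rcases le_or_gt (h (ξ n)) (c + ε) with hcase | hcase
      · have hB := sublevel_invariant φ hφ h hcont hdec
          (by linarith : (0:ℝ) ≤ c + ε) hcase zero_le_one
        exact le_max_of_le_left (by linarith)
      · have hdecr : η ≤ h (ξ (n:ℝ)) - h (φ 1 (ξ n)) := hmin _ (by linarith)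
        have hlt : h (ξ ((n:ℝ)+1)) ≤ h (ξ (n:ℝ)) - η/2 := by linarith
        rcases le_or_gt (h (ξ n)) (c + 2*ε) with hc2 | hc2
        · exact le_max_of_le_left (by linarith)
        · have hih : h (ξ (n:ℝ)) ≤ a - n * (η/2) := by
            rcases max_cases (c + 2*ε) (a - (n:ℝ) * (η/2)) with ⟨he, _⟩ | ⟨he, _⟩
            · rw [he] at ih; linarith
            · rwa [he] at ih
          refine le_max_of_le_right ?_
          have hr : ((n:ℝ)+1) * (η/2) = (n:ℝ) * (η/2) + η/2 := by ring
          rw [hr]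
          linarith
  -- conclude
  have htpos : (0:ℝ) ≤ t := le_trans (by positivity) htT
  have hnN : (N : ℕ) + 1 ≤ ⌊t⌋₊ := Nat.le_floor (by exact_mod_cast htT)
  have hnle : (⌊t⌋₊:ℝ) ≤ t := Nat.floor_le htpos
  have hlt1 : t < (⌊t⌋₊:ℝ) + 1 := Nat.lt_floor_add_one t
  have hsn : t - ⌊t⌋₊ ∈ Set.Icc (0:ℝ) 1 := ⟨by linarith, by linarith⟩
  have hξn : h (ξ ⌊t⌋₊) ≤ c + 2*ε := by
    have hi := hinv ⌊t⌋₊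
    have hNn : (N:ℝ) ≤ (⌊t⌋₊:ℝ) := by exact_mod_cast Nat.le_of_succ_le hnN
    have h1 : a - (⌊t⌋₊:ℝ) * (η/2) ≤ c := by
      have h2 : (N:ℝ) * η ≤ (⌊t⌋₊:ℝ) * η := mul_le_mul_of_nonneg_right hNn hηpos.le
      have h3 : (⌊t⌋₊:ℝ) * (η/2) = ((⌊t⌋₊:ℝ) * η)/2 := by ring
      have h4 : (N:ℝ) * η / 2 ≥ a / 2 := by linarith
      rw [h3, hc]; linarith
    rcases max_cases (c + 2*ε) (a - (⌊t⌋₊:ℝ) * (η/2)) with ⟨he, _⟩ | ⟨he, _⟩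
    · rw [he] at hi; exact hi
    · rw [he] at hi; linarith
  have hφs : h (φ (t - ⌊t⌋₊) (ξ ⌊t⌋₊)) ≤ c + 2*ε :=
    sublevel_invariant φ hφ h hcont hdec (by linarith) hξn hsn.1
  have hfinal : h (ξ ((⌊t⌋₊:ℝ) + (t - ⌊t⌋₊))) < h (φ (t - ⌊t⌋₊) (ξ ⌊t⌋₊)) + ε :=
    hstep ⌊t⌋₊ (t - ⌊t⌋₊) hsn
  rw [show ((⌊t⌋₊:ℝ) + (t - ⌊t⌋₊)) = t by ring, hξt, ← ha] at hfinal
  linarith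

end Aux

/-- If `|h|` strictly decreases along orbits off the zero set of `h` while the sign of `h`
is preserved, then the chain recurrent set is contained in the zero set of `h`. -/
theorem chainRecurrent_subset_zeroSet
    {Λ : Type*} [MetricSpace Λ] [CompactSpace Λ]
    (φ : ℝ → Λ → Λ) (hφ : IsFlow φ)
    (h : Λ → ℝ) (hcont : Continuous h)
    (hdec : ∀ p : Λ, h p ≠ 0 → ∀ t : ℝ, 0 < t →
      |h (φ t p)| < |h p| ∧ Real.sign (h (φ t p)) = Real.sign (h p)) :
    CR φ ⊆ h ⁻¹' {0} := by
  intro p hp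
  have h1 : h p ≤ 0 := aux_le_zero φ hφ h hcont hdec p hp
  have hdec' : ∀ q : Λ, (-h) q ≠ 0 → ∀ t : ℝ, 0 < t →
      |(-h) (φ t q)| < |(-h) q| ∧ Real.sign ((-h) (φ t q)) = Real.sign ((-h) q) := by
    intro q hq t ht
    simp only [Pi.neg_apply, abs_neg, sign_neg']
    obtain ⟨ha1, ha2⟩ := hdec q (by simpa using hq) t ht
    exact ⟨ha1, by rw [ha2]⟩
  have h2 : (-h) p ≤ 0 := aux_le_zero φ hφ (-h) hcont.neg hdec' p hp
  simp only [Pi.neg_apply, neg_nonpos] at h2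
  simp only [mem_preimage, mem_singleton_iff]
  linarith
end

section
/- Let E be a Euclidean space, N₀ ≥ 1 a real number, and φ : ℝ × E → E a flow such that for every p ∈ E the map t ↦ φ(t, p) is differentiable and satisfies: whenever ‖φ(t,p)‖ ≥ N₀, the derivative of t ↦ ‖φ(t,p)‖² equals −2‖φ(t,p)‖². Then for every p with ‖p‖ ≤ N₀ + 1, one has ‖φ(1, p)‖ ≤ N₀; in particular φ(1, ·) maps the closed ball of radius N₀ + 1 centered at the origin into the closed ball of radius N₀. -/
/-!
Where `‖φ(t,p)‖ ≥ N₀` the weighted quantity `‖φ(t,p)‖² e^{2t}` is stationary, so it cannot rise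
above `max (N₀² e², ‖p‖²)` on `[0, 1]` (a fencing argument). Hence
`‖φ(1,p)‖² ≤ max (N₀², ‖p‖² e⁻²)`, and `‖p‖ ≤ N₀ + 1 ≤ e N₀` once `N₀ ≥ 1`.
-/

open Real Set

lemma HasDerivAt.mul_exp_of_neg_mul {f : ℝ → ℝ} {k t : ℝ} (hf : HasDerivAt f (-k * f t) t) :
    HasDerivAt (fun s => f s * Real.exp (k * s)) 0 t := by
  have hexp : HasDerivAt (fun s => Real.exp (k * s)) (Real.exp (k * t) * k) t := by
    simpa using ((hasDerivAt_id t).const_mul k).exp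
  have hmul := hf.mul hexp
  rwa [show -k * f t * Real.exp (k * t) + f t * (Real.exp (k * t) * k) = 0 by ring] at hmul

lemma mul_exp_le_max_of_hasDerivAt_neg_mul {f : ℝ → ℝ} {c k T : ℝ} (hc : 0 ≤ c) (hk : 0 ≤ k)
    (hT : 0 ≤ T) (hf : Differentiable ℝ f) (hf' : ∀ t, c ≤ f t → HasDerivAt f (-k * f t) t) :
    f T * exp (k * T) ≤ max (c * exp (k * T)) (f 0) := by
  set h : ℝ → ℝ := fun s => f s * exp (k * s)
  set C := max (c * exp (k * T)) (f 0)
  have hh : Differentiable ℝ h := hf.mul fun s => ((differentiableAt_id.const_mul k).exp)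
  have deriv_eq_zero : ∀ x ∈ Ico 0 T, C ≤ h x → deriv h x = 0 := by
    intro x hx hCx
    have hcx : c * exp (k * x) ≤ f x * exp (k * x) :=
      calc c * exp (k * x) ≤ c * exp (k * T) := by gcongr; exact hx.2.le
        _ ≤ C := le_max_left _ _
        _ ≤ h x := hCx
    exact (HasDerivAt.mul_exp_of_neg_mul (hf' x (le_of_mul_le_mul_right hcx (exp_pos _)))).deriv
  -- Fence `h` by the lines `C + δ t`, `δ > 0`: where `h` touches one, `h' = 0 < δ`.
  refine le_of_forall_pos_le_add fun ε hε => ?_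
  have hδ : 0 < ε / (T + 1) := by positivity
  have hfence := image_le_of_deriv_right_lt_deriv_boundary (f := h) (f' := deriv h)
    (B := fun t => C + ε / (T + 1) * t) (B' := fun _ => ε / (T + 1))
    hh.continuous.continuousOn (fun x _ => (hh x).hasDerivAt.hasDerivWithinAt)
    (by simp [h, C]) (fun x => by simpa using ((hasDerivAt_id x).const_mul (ε / (T + 1))).const_add C)
    (fun x hx hxB => by
      rw [deriv_eq_zero x hx (hxB ▸ le_add_of_nonneg_right (by nlinarith [hx.1]))]
      exact hδ)
    ⟨hT, le_rfl⟩
  calc h T ≤ C + ε / (T + 1) * T := hfence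
    _ ≤ C + ε := by
      gcongr
      rw [div_mul_eq_mul_div, div_le_iff₀ (by linarith)]
      nlinarith

lemma add_one_le_exp_one_mul {x : ℝ} (hx : 1 ≤ x) : x + 1 ≤ exp 1 * x := by
  have : 2 ≤ exp 1 := by linarith [add_one_le_exp 1]
  nlinarith

theorem time_one_map_into_ball_general
    {E : Type*} [NormedAddCommGroup E] [InnerProductSpace ℝ E]
    (N₀ : ℝ) (hN₀ : 1 ≤ N₀)
    (φ : ℝ → E → E)
    (hid : ∀ x : E, φ 0 x = x)
    (hdiff : ∀ p : E, Differentiable ℝ (fun t : ℝ => φ t p))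
    (hderiv : ∀ (p : E) (t : ℝ), N₀ ≤ ‖φ t p‖ →
      HasDerivAt (fun s : ℝ => ‖φ s p‖ ^ 2) (-2 * ‖φ t p‖ ^ 2) t) :
    ∀ p : E, ‖p‖ ≤ N₀ + 1 → ‖φ 1 p‖ ≤ N₀ := by
  intro p hp
  have hN₀' : 0 ≤ N₀ := by linarith
  have hweighted := mul_exp_le_max_of_hasDerivAt_neg_mul (f := fun t => ‖φ t p‖ ^ 2)
    (sq_nonneg N₀) zero_le_two zero_le_one ((hdiff p).norm_sq ℝ)
    fun t ht => hderiv p t ((sq_le_sq₀ hN₀' (norm_nonneg _)).1 ht)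
  have hstart : ‖φ 0 p‖ ^ 2 ≤ N₀ ^ 2 * exp (2 * 1) := by
    rw [hid, mul_one, show exp 2 = exp 1 ^ 2 by rw [← exp_nat_mul]; norm_num, ← mul_pow,
      mul_comm]
    gcongr
    exact hp.trans (add_one_le_exp_one_mul hN₀)
  have hend : ‖φ 1 p‖ ^ 2 ≤ N₀ ^ 2 :=
    le_of_mul_le_mul_right (hweighted.trans (max_le le_rfl hstart)) (exp_pos _)
  exact (sq_le_sq₀ (norm_nonneg _) hN₀').1 hend

/-- If the squared norm along the flow satisfies `(d/dt)‖φ(t,p)‖² = -2‖φ(t,p)‖²` whenever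
`‖φ(t,p)‖ ≥ N₀` (with `N₀ ≥ 1`), then the time-one map takes the closed ball of radius
`N₀ + 1` into the closed ball of radius `N₀`. -/
theorem time_one_map_into_ball
    {E : Type*} [NormedAddCommGroup E] [InnerProductSpace ℝ E] [FiniteDimensional ℝ E]
    (N₀ : ℝ) (hN₀ : 1 ≤ N₀)
    (φ : ℝ → E → E)
    (hid : ∀ x : E, φ 0 x = x)
    (hgroup : ∀ (s t : ℝ) (x : E), φ (s + t) x = φ s (φ t x))
    (hdiff : ∀ p : E, Differentiable ℝ (fun t : ℝ => φ t p))
    (hderiv : ∀ (p : E) (t : ℝ), N₀ ≤ ‖φ t p‖ →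
      HasDerivAt (fun s : ℝ => ‖φ s p‖ ^ 2) (-2 * ‖φ t p‖ ^ 2) t) :
    ∀ p : E, ‖p‖ ≤ N₀ + 1 → ‖φ 1 p‖ ≤ N₀ :=
  time_one_map_into_ball_general N₀ hN₀ φ hid hdiff hderiv
end
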